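/- Let H = V + Δ on ℓ²(ℤ) with bounded potential, and denote σ₊ = sup(Spec H), σ₋ = inf(Spec H). Then for every integer N ≥ 2: σ₊ ≤ sup over intervals I of length N of sup(Spec H_I) + 2/N, and σ₋ ≥ inf over intervals I of length N of inf(Spec H_I) - 2/N. -/

import Mathlib

noncomputable section

abbrev l2Z := lp (fun _ : ℤ => ℝ) 2

def jacobi (V : ℤ → ℝ) (a : ℤ) (N : ℕ) : Matrix (Fin N) (Fin N) ℝ :=
  fun i j =>
    if (i : ℕ) = (j : ℕ) then V (a + (i : ℕ))
    else if (i : ℕ) + 1 = (j : ℕ) ∨ (j : ℕ) + 1 = (i : ℕ) then 1 else 0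

/-- The set of all eigenvalues of all restrictions of the Schrödinger operator with
potential `V` to intervals of length `N`. -/
def restEigs (V : ℤ → ℝ) (N : ℕ) : Set ℝ :=
  {E' | ∃ (a : ℤ) (v : Fin N → ℝ), v ≠ 0 ∧ (jacobi V a N).mulVec v = E' • v}

open scoped InnerProductSpace
open Finset Matrix


lemma jacobi_apply (V : ℤ → ℝ) (a : ℤ) (N : ℕ) (i j : Fin N) :
    jacobi V a N i j =
      (if (i : ℕ) = (j : ℕ) then V (a + (i : ℕ)) else 0)
      + ((if (i : ℕ) + 1 = (j : ℕ) then 1 else 0)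
      + (if (j : ℕ) + 1 = (i : ℕ) then 1 else 0)) := by
  unfold jacobi
  split_ifs <;> simp_all <;> omega

lemma jacobi_isHermitian (V : ℤ → ℝ) (a : ℤ) (N : ℕ) : (jacobi V a N).IsHermitian := by
  unfold Matrix.IsHermitian
  ext i j
  simp only [Matrix.conjTranspose_apply, star_trivial, jacobi]
  split_ifs with h1 h2 h3 h4 <;> try rfl
  · congr 1; omega
  all_goals omega

def extFin {N : ℕ} (w : Fin N → ℝ) : ℕ → ℝ := fun k => if h : k < N then w ⟨k, h⟩ else 0

lemma extFin_coe {N : ℕ} (w : Fin N → ℝ) (i : Fin N) : extFin w i = w i := by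
  simp [extFin, i.isLt]

lemma sum_ite_eq_extFin {N : ℕ} (w : Fin N → ℝ) (k : ℕ) :
    ∑ j : Fin N, (if k = (j : ℕ) then w j else 0) = extFin w k := by
  unfold extFin
  split_ifs with h
  · rw [Finset.sum_eq_single ⟨k, h⟩]
    · simp
    · intro j _ hj; rw [if_neg]; intro hc; exact hj (by ext; simp only [Fin.val_mk]; omega)
    · simp
  · apply Finset.sum_eq_zero; intro j _; rw [if_neg]; intro hc; exact h (hc ▸ j.isLt)

lemma quadform (V : ℤ → ℝ) (a : ℤ) (N : ℕ) (w : Fin N → ℝ) :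
    w ⬝ᵥ ((jacobi V a N).mulVec w) =
      (∑ i ∈ range N, V (a + i) * (extFin w i * extFin w i))
      + 2 * ∑ i ∈ range (N - 1), extFin w i * extFin w (i + 1) := by
  have expand : ∀ i : Fin N, (jacobi V a N).mulVec w i
      = V (a + (i : ℕ)) * w i + (extFin w ((i : ℕ) + 1)
        + ∑ j : Fin N, (if ((j : ℕ) + 1 = (i : ℕ)) then w j else 0)) := by
    intro i
    simp only [Matrix.mulVec, dotProduct, jacobi_apply, add_mul, Finset.sum_add_distrib,
      ite_mul, zero_mul, one_mul]
    congr 1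
    · exact (sum_ite_eq_extFin (fun j => V (a + (i : ℕ)) * w j) (i : ℕ)).trans
        (extFin_coe (fun j => V (a + (i : ℕ)) * w j) i)
    congr 1
    exact sum_ite_eq_extFin w ((i : ℕ) + 1)
  have third : ∑ i : Fin N, w i * (∑ j : Fin N, (if ((j : ℕ) + 1 = (i : ℕ)) then w j else 0))
      = ∑ j : Fin N, extFin w ((j : ℕ) + 1) * w j := by
    calc ∑ i : Fin N, w i * (∑ j : Fin N, (if ((j : ℕ) + 1 = (i : ℕ)) then w j else 0))
        = ∑ i : Fin N, ∑ j : Fin N, (if ((j : ℕ) + 1 = (i : ℕ)) then w i * w j else 0) := by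
          refine Finset.sum_congr rfl fun i _ => ?_
          rw [Finset.mul_sum]
          refine Finset.sum_congr rfl fun j _ => ?_
          split_ifs <;> simp
      _ = ∑ j : Fin N, ∑ i : Fin N, (if ((j : ℕ) + 1 = (i : ℕ)) then w i * w j else 0) :=
          Finset.sum_comm
      _ = ∑ j : Fin N, extFin w ((j : ℕ) + 1) * w j := by
          refine Finset.sum_congr rfl fun j _ => ?_
          rw [← sum_ite_eq_extFin w ((j : ℕ) + 1), Finset.sum_mul]
          refine Finset.sum_congr rfl fun i _ => ?_
          split_ifs <;> simp
  have main : w ⬝ᵥ ((jacobi V a N).mulVec w)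
      = (∑ i : Fin N, V (a + (i : ℕ)) * (w i * w i))
        + 2 * ∑ i : Fin N, w i * extFin w ((i : ℕ) + 1) := by
    unfold dotProduct
    calc ∑ i : Fin N, w i * (jacobi V a N).mulVec w i
        = ∑ i : Fin N, (V (a + (i : ℕ)) * (w i * w i)
            + (w i * extFin w ((i : ℕ) + 1)
            + w i * ∑ j : Fin N, (if ((j : ℕ) + 1 = (i : ℕ)) then w j else 0))) := by
          refine Finset.sum_congr rfl fun i _ => ?_
          rw [expand]; ring
      _ = (∑ i : Fin N, V (a + (i : ℕ)) * (w i * w i))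
            + ((∑ i : Fin N, w i * extFin w ((i : ℕ) + 1))
            + ∑ i : Fin N, w i * ∑ j : Fin N, (if ((j : ℕ) + 1 = (i : ℕ)) then w j else 0)) := by
          rw [Finset.sum_add_distrib, Finset.sum_add_distrib]
      _ = (∑ i : Fin N, V (a + (i : ℕ)) * (w i * w i))
            + 2 * ∑ i : Fin N, w i * extFin w ((i : ℕ) + 1) := by
          rw [third]
          have : ∑ j : Fin N, extFin w ((j : ℕ) + 1) * w j
              = ∑ i : Fin N, w i * extFin w ((i : ℕ) + 1) := by
            refine Finset.sum_congr rfl fun j _ => mul_comm _ _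
          rw [this]; ring
  rw [main]
  have e1 : ∑ i : Fin N, V (a + (i : ℕ)) * (w i * w i)
      = ∑ i ∈ range N, V (a + i) * (extFin w i * extFin w i) := by
    rw [← Fin.sum_univ_eq_sum_range (fun k => V (a + k) * (extFin w k * extFin w k)) N]
    refine Finset.sum_congr rfl fun i _ => by rw [extFin_coe]
  have e2 : ∑ i : Fin N, w i * extFin w ((i : ℕ) + 1)
      = ∑ i ∈ range N, extFin w i * extFin w (i + 1) := by
    rw [← Fin.sum_univ_eq_sum_range (fun k => extFin w k * extFin w (k + 1)) N]
    refine Finset.sum_congr rfl fun i _ => by rw [extFin_coe]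
  have e3 : ∑ i ∈ range N, extFin w i * extFin w (i + 1)
      = ∑ i ∈ range (N - 1), extFin w i * extFin w (i + 1) := by
    cases N with
    | zero => rfl
    | succ n =>
      rw [Finset.sum_range_succ, Nat.succ_sub_one]
      have : extFin w (n + 1) = 0 := by simp [extFin]
      rw [this, mul_zero, add_zero]
  rw [e1, e2, e3]

lemma herm_dot_eq {N : ℕ} (A : Matrix (Fin N) (Fin N) ℝ) (hA : A.IsHermitian) (w : Fin N → ℝ) :
    ∃ c : Fin N → ℝ, (w ⬝ᵥ A.mulVec w = ∑ i, hA.eigenvalues i * (c i * c i))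
      ∧ (w ⬝ᵥ w = ∑ i, c i * c i) := by
  have hsymA : ∀ i j, A i j = A j i := by
    intro i j
    conv_lhs => rw [← hA]
    simp [Matrix.conjTranspose_apply]
  set x : EuclideanSpace ℝ (Fin N) := (WithLp.equiv 2 (Fin N → ℝ)).symm w with hx
  set b := hA.eigenvectorBasis with hb
  set c : Fin N → ℝ := fun i => ⟪x, b i⟫_ℝ with hc
  have hinner : ∀ v v' : EuclideanSpace ℝ (Fin N), ⟪v, v'⟫_ℝ = ∑ i, v i * v' i := by
    intro v v'
    simp [PiLp.inner_apply, RCLike.inner_apply]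
    exact Finset.sum_congr rfl fun _ _ => mul_comm _ _
  have hdm : ∀ v : Fin N → ℝ, v ⬝ᵥ A.mulVec v = ∑ i, v i * A.mulVec v i := fun _ => rfl
  have hsymm : ∀ v u : Fin N → ℝ, v ⬝ᵥ A.mulVec u = A.mulVec v ⬝ᵥ u := by
    intro v u
    simp only [dotProduct, Matrix.mulVec, Finset.mul_sum, Finset.sum_mul]
    rw [Finset.sum_comm]
    refine Finset.sum_congr rfl fun i _ => Finset.sum_congr rfl fun j _ => ?_
    rw [hsymA i j]; ring
  refine ⟨c, ?_, ?_⟩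
  · have key : ∀ i, ⟪b i, ((WithLp.equiv 2 (Fin N → ℝ)).symm (A.mulVec w))⟫_ℝ
        = hA.eigenvalues i * ⟪b i, x⟫_ℝ := by
      intro i
      rw [hinner, hinner]
      have h1 : ∑ j, (b i) j * ((WithLp.equiv 2 (Fin N → ℝ)).symm (A.mulVec w)) j
          = (fun j => (b i) j) ⬝ᵥ A.mulVec w := rfl
      rw [h1, hsymm]
      have h2 : A.mulVec (fun j => (b i) j) = hA.eigenvalues i • (fun j => (b i) j) := by
        exact hA.mulVec_eigenvectorBasis i
      rw [h2, smul_dotProduct, smul_eq_mul]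
      rfl
    have h0 : w ⬝ᵥ A.mulVec w = ⟪x, (WithLp.equiv 2 (Fin N → ℝ)).symm (A.mulVec w)⟫_ℝ := by
      rw [hinner]; rfl
    rw [h0, ← b.sum_inner_mul_inner x ((WithLp.equiv 2 (Fin N → ℝ)).symm (A.mulVec w))]
    refine Finset.sum_congr rfl fun i _ => ?_
    rw [key i]
    have : ⟪b i, x⟫_ℝ = c i := real_inner_comm _ _
    rw [this]; ring
  · have h0 : w ⬝ᵥ w = ⟪x, x⟫_ℝ := by rw [hinner]; rfl
    rw [h0, ← b.sum_inner_mul_inner x x]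
    refine Finset.sum_congr rfl fun i _ => ?_
    have : ⟪b i, x⟫_ℝ = c i := real_inner_comm _ _
    rw [this]

lemma herm_dot_le {N : ℕ} (A : Matrix (Fin N) (Fin N) ℝ) (hA : A.IsHermitian)
    {E : ℝ} (hE : ∀ i, hA.eigenvalues i ≤ E) (w : Fin N → ℝ) :
    w ⬝ᵥ A.mulVec w ≤ E * (w ⬝ᵥ w) := by
  obtain ⟨c, h1, h2⟩ := herm_dot_eq A hA w
  rw [h1, h2, Finset.mul_sum]
  exact Finset.sum_le_sum fun i _ => mul_le_mul_of_nonneg_right (hE i) (mul_self_nonneg _)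

lemma herm_dot_ge {N : ℕ} (A : Matrix (Fin N) (Fin N) ℝ) (hA : A.IsHermitian)
    {E : ℝ} (hE : ∀ i, E ≤ hA.eigenvalues i) (w : Fin N → ℝ) :
    E * (w ⬝ᵥ w) ≤ w ⬝ᵥ A.mulVec w := by
  obtain ⟨c, h1, h2⟩ := herm_dot_eq A hA w
  rw [h1, h2, Finset.mul_sum]
  exact Finset.sum_le_sum fun i _ => mul_le_mul_of_nonneg_right (hE i) (mul_self_nonneg _)

lemma eigen_mem (V : ℤ → ℝ) (a : ℤ) (N : ℕ) (i : Fin N) :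
    (jacobi_isHermitian V a N).eigenvalues i ∈ restEigs V N := by
  set hA := jacobi_isHermitian V a N
  refine ⟨a, fun j => hA.eigenvectorBasis i j, ?_, ?_⟩
  · intro h
    apply hA.eigenvectorBasis.orthonormal.ne_zero i
    ext j
    exact congrFun h j
  · exact hA.mulVec_eigenvectorBasis i

lemma sum_sq_shift {N : ℕ} (g : ℕ → ℝ) :
    ∑ i ∈ range (N - 1), g (i + 1) * g (i + 1) ≤ ∑ i ∈ range N, g i * g i := by
  cases N with
  | zero => simp
  | succ n =>
    rw [Nat.succ_sub_one, Finset.sum_range_succ']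
    exact le_add_of_nonneg_right (mul_self_nonneg _)

lemma sum_sq_trunc {N : ℕ} (g : ℕ → ℝ) :
    ∑ i ∈ range (N - 1), g i * g i ≤ ∑ i ∈ range N, g i * g i :=
  Finset.sum_le_sum_of_subset_of_nonneg
    (Finset.range_subset_range.mpr (Nat.sub_le N 1)) (fun i _ _ => mul_self_nonneg _)

lemma restEigs_abs_bound {V : ℤ → ℝ} {C : ℝ} (hC : ∀ n, |V n| ≤ C) {N : ℕ}
    {E : ℝ} (hE : E ∈ restEigs V N) : |E| ≤ C + 2 := by
  obtain ⟨a, v, hv, heig⟩ := hE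
  set g := extFin v with hg
  set R := ∑ i ∈ range N, g i * g i with hR
  have hvv : v ⬝ᵥ v = R := by
    rw [hR, ← Fin.sum_univ_eq_sum_range (fun k => g k * g k) N]
    exact Finset.sum_congr rfl fun i _ => by simp [hg, extFin_coe]
  have hRpos : 0 < R := by
    have : ∃ i, v i ≠ 0 := by
      by_contra h
      push_neg at h
      exact hv (funext h)
    obtain ⟨i, hi⟩ := this
    rw [← hvv]
    have : (0:ℝ) < v i * v i := mul_self_pos.mpr hi
    calc (0:ℝ) < v i * v i := this
      _ ≤ v ⬝ᵥ v := Finset.single_le_sum (f := fun j => v j * v j)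
          (fun j _ => mul_self_nonneg _) (Finset.mem_univ i)
  have hq : E * R = v ⬝ᵥ (jacobi V a N).mulVec v := by
    rw [heig, dotProduct_smul, smul_eq_mul, hvv]
  rw [quadform] at hq
  have hC0 : 0 ≤ C := le_trans (abs_nonneg _) (hC 0)
  have hb1 : |∑ i ∈ range N, V (a + i) * (g i * g i)| ≤ C * R := by
    calc |∑ i ∈ range N, V (a + i) * (g i * g i)|
        ≤ ∑ i ∈ range N, |V (a + i) * (g i * g i)| := Finset.abs_sum_le_sum_abs _ _
      _ ≤ ∑ i ∈ range N, C * (g i * g i) := by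
          refine Finset.sum_le_sum fun i _ => ?_
          rw [abs_mul, abs_of_nonneg (mul_self_nonneg (g i))]
          exact mul_le_mul_of_nonneg_right (hC _) (mul_self_nonneg _)
      _ = C * R := by rw [hR, Finset.mul_sum]
  have hb2 : |∑ i ∈ range (N - 1), g i * g (i + 1)| ≤ R := by
    calc |∑ i ∈ range (N - 1), g i * g (i + 1)|
        ≤ ∑ i ∈ range (N - 1), |g i * g (i + 1)| := Finset.abs_sum_le_sum_abs _ _
      _ ≤ ∑ i ∈ range (N - 1), (g i * g i + g (i + 1) * g (i + 1)) / 2 := by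
          refine Finset.sum_le_sum fun i _ => ?_
          rw [abs_mul]
          nlinarith [sq_nonneg (|g i| - |g (i + 1)|), abs_nonneg (g i), abs_nonneg (g (i+1)),
            abs_mul_abs_self (g i), abs_mul_abs_self (g (i+1))]
      _ = ((∑ i ∈ range (N - 1), g i * g i) + ∑ i ∈ range (N - 1), g (i+1) * g (i+1)) / 2 := by
          rw [← Finset.sum_add_distrib, Finset.sum_div]
      _ ≤ (R + R) / 2 := by
          have := sum_sq_trunc (N := N) g
          have := sum_sq_shift (N := N) g
          rw [hR]
          linarith
      _ = R := by ring
  have habs : |E| * R ≤ (C + 2) * R := by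
    calc |E| * R = |E * R| := by rw [abs_mul, abs_of_pos hRpos]
      _ = |(∑ i ∈ range N, V (a + i) * (g i * g i))
            + 2 * ∑ i ∈ range (N - 1), g i * g (i + 1)| := by rw [hq]
      _ ≤ |∑ i ∈ range N, V (a + i) * (g i * g i)|
            + |2 * ∑ i ∈ range (N - 1), g i * g (i + 1)| := abs_add_le _ _
      _ ≤ C * R + 2 * R := by
          rw [abs_mul]
          have : |(2:ℝ)| = 2 := by norm_num
          rw [this]
          linarith
      _ = (C + 2) * R := by ring
  exact le_of_mul_le_mul_right habs hRpos

lemma restEigs_bddAbove {V : ℤ → ℝ} {C : ℝ} (hC : ∀ n, |V n| ≤ C) (N : ℕ) :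
    BddAbove (restEigs V N) :=
  ⟨C + 2, fun _ hE => (abs_le.mp (restEigs_abs_bound hC hE)).2⟩

lemma restEigs_bddBelow {V : ℤ → ℝ} {C : ℝ} (hC : ∀ n, |V n| ≤ C) (N : ℕ) :
    BddBelow (restEigs V N) :=
  ⟨-(C + 2), fun _ hE => (abs_le.mp (restEigs_abs_bound hC hE)).1⟩

lemma l2_inner_tsum (u v : l2Z) : ⟪u, v⟫_ℝ = ∑' n, u n * v n := by
  rw [lp.inner_eq_tsum]; simp [RCLike.inner_apply]; exact tsum_congr fun _ => mul_comm _ _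

lemma l2_summable_mul (u v : l2Z) : Summable fun n => u n * v n := by
  have := lp.summable_inner (𝕜 := ℝ) u v
  have h2 : Summable fun n => v n * u n := by simpa [RCLike.inner_apply] using this
  exact h2.congr fun _ => mul_comm _ _

lemma abs_mul_le_half (x y : ℝ) : |x * y| ≤ (x * x + y * y) / 2 := by
  rw [abs_mul]
  nlinarith [sq_nonneg (|x| - |y|), abs_nonneg x, abs_nonneg y,
    abs_mul_abs_self x, abs_mul_abs_self y]

lemma summable_mul_of_sq {f g : ℤ → ℝ} (hf : Summable fun n => f n * f n)
    (hg : Summable fun n => g n * g n) : Summable fun n => f n * g n := by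
  apply Summable.of_abs
  exact Summable.of_nonneg_of_le (fun n => abs_nonneg _) (fun n => abs_mul_le_half _ _)
    ((hf.add hg).div_const 2)

lemma window_tsum {f : ℤ → ℝ} (hf : Summable f) (k : ℕ) :
    (Summable fun a : ℤ => ∑ i ∈ range k, f (a + i)) ∧
    (∑' a : ℤ, ∑ i ∈ range k, f (a + i)) = k * ∑' n, f n := by
  have hsh : ∀ i : ℕ, Summable fun a : ℤ => f (a + (i : ℤ)) := fun i =>
    (Equiv.addRight (i : ℤ)).summable_iff.mpr hf
  constructor
  · exact summable_sum fun i _ => hsh i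
  · rw [Summable.tsum_finsetSum fun i _ => hsh i]
    have : ∀ i ∈ range k, (∑' b : ℤ, f (b + (i : ℤ))) = ∑' n, f n := fun i _ =>
      (Equiv.addRight (i : ℤ)).tsum_eq f
    rw [Finset.sum_congr rfl this, Finset.sum_const, Finset.card_range, nsmul_eq_mul]

lemma quad_bound (V : ℤ → ℝ) {C : ℝ} (hC : ∀ n, |V n| ≤ C)
    (H : l2Z →L[ℝ] l2Z)
    (hH : ∀ u : l2Z, ∀ n : ℤ, H u n = V n * u n + u (n + 1) + u (n - 1))
    {N : ℕ} (hN : 2 ≤ N) (u : l2Z) :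
    (sInf (restEigs V N) - 2 / N) * ‖u‖ ^ 2 ≤ ⟪H u, u⟫_ℝ ∧
    ⟪H u, u⟫_ℝ ≤ (sSup (restEigs V N) + 2 / N) * ‖u‖ ^ 2 := by
  set x : ℤ → ℝ := fun n => u n with hx
  have hsq : Summable fun n => x n * x n := l2_summable_mul u u
  have hS : (∑' n, x n * x n) = ‖u‖ ^ 2 := by
    rw [← real_inner_self_eq_norm_sq u, l2_inner_tsum u u]
  have hsq1 : Summable fun n => x (n + 1) * x (n + 1) := by
    have h := ((Equiv.addRight (1 : ℤ)).summable_iff (f := fun n : ℤ => x n * x n)).mpr hsq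
    exact h
  have hsqm1 : Summable fun n => x (n - 1) * x (n - 1) := by
    have h := ((Equiv.subRight (1 : ℤ)).summable_iff (f := fun n : ℤ => x n * x n)).mpr hsq
    exact h
  have hP : Summable fun n => x n * x (n + 1) := summable_mul_of_sq hsq hsq1
  have hVsq : Summable fun n => V n * (x n * x n) := by
    apply Summable.of_abs
    refine Summable.of_nonneg_of_le (fun n => abs_nonneg _) (fun n => ?_) (hsq.mul_left C)
    rw [abs_mul, abs_of_nonneg (mul_self_nonneg (x n))]
    exact mul_le_mul_of_nonneg_right (hC n) (mul_self_nonneg _)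
  set D := ∑' n, V n * (x n * x n) with hD
  set P := ∑' n, x n * x (n + 1) with hPdef
  set S := ∑' n, x n * x n with hSdef
  -- quadratic form identity
  have hsum2 : Summable fun n => x (n + 1) * x n := summable_mul_of_sq hsq1 hsq
  have hsum3 : Summable fun n => x (n - 1) * x n := summable_mul_of_sq hsqm1 hsq
  have hQ : ⟪H u, u⟫_ℝ = D + (P + P) := by
    rw [l2_inner_tsum]
    have h1 : ∀ n : ℤ, (H u) n * u n
        = V n * (x n * x n) + (x (n + 1) * x n + x (n - 1) * x n) := fun n => by
      rw [hH u n]; ring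
    rw [tsum_congr h1, Summable.tsum_add hVsq (hsum2.add hsum3), Summable.tsum_add hsum2 hsum3]
    congr 1
    congr 1
    · exact tsum_congr fun n => mul_comm _ _
    · have h2 : ∀ n : ℤ, x (n - 1) * x n = (fun m => x m * x (m + 1)) (n - 1) := fun n => by
        simp only [sub_add_cancel]
      rw [tsum_congr h2]
      exact (Equiv.subRight (1 : ℤ)).tsum_eq fun m => x m * x (m + 1)
  -- window sums
  obtain ⟨hW1sum, hW1⟩ := window_tsum hVsq N
  obtain ⟨hW2sum, hW2⟩ := window_tsum hP (N - 1)
  obtain ⟨hWrsum, hWr⟩ := window_tsum hsq N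
  have hwext : ∀ (a : ℤ) (i : ℕ), i < N → extFin (fun j : Fin N => x (a + j)) i = x (a + i) :=
    fun a i h => by simp [extFin, h]
  have hQa : ∀ a : ℤ, ((fun i : Fin N => x (a + i)) ⬝ᵥ (jacobi V a N).mulVec
        (fun i : Fin N => x (a + i)))
      = (∑ i ∈ range N, V (a + i) * (x (a + i) * x (a + i)))
        + 2 * ∑ i ∈ range (N - 1), x (a + i) * x ((a + i) + 1) := by
    intro a
    rw [quadform]
    congr 1
    · refine Finset.sum_congr rfl fun i hi => ?_
      rw [hwext a i (mem_range.mp hi)]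
    · congr 1
      refine Finset.sum_congr rfl fun i hi => ?_
      have hi' : i < N - 1 := mem_range.mp hi
      rw [hwext a i (by omega), hwext a (i + 1) (by omega)]
      congr 2
      push_cast
      ring
  have hvv : ∀ a : ℤ, ((fun i : Fin N => x (a + i)) ⬝ᵥ (fun i : Fin N => x (a + i)))
      = ∑ i ∈ range N, x (a + i) * x (a + i) := by
    intro a
    exact Fin.sum_univ_eq_sum_range (fun k : ℕ => x (a + k) * x (a + k)) N
  have hLsum : Summable fun a : ℤ => (∑ i ∈ range N, V (a + i) * (x (a + i) * x (a + i)))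
      + 2 * ∑ i ∈ range (N - 1), x (a + i) * x ((a + i) + 1) := by
    have h2 : (fun a : ℤ => ∑ i ∈ range (N - 1), x (a + i) * x ((a + i) + 1))
        = fun a : ℤ => ∑ i ∈ range (N - 1), (fun n => x n * x (n + 1)) (a + i) := rfl
    exact hW1sum.add (by rw [show (fun a : ℤ => 2 * ∑ i ∈ range (N - 1), x (a + i) * x ((a + i) + 1)) = fun a : ℤ => 2 * ∑ i ∈ range (N - 1), (fun n => x n * x (n + 1)) (a + i) from rfl]; exact hW2sum.mul_left 2)
  have hLtsum : (∑' a : ℤ, ((∑ i ∈ range N, V (a + i) * (x (a + i) * x (a + i)))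
      + 2 * ∑ i ∈ range (N - 1), x (a + i) * x ((a + i) + 1)))
      = (N : ℝ) * D + 2 * (((N - 1 : ℕ) : ℝ) * P) := by
    rw [Summable.tsum_add hW1sum (hW2sum.mul_left 2), hW1, tsum_mul_left, hW2]
  have hAbove := restEigs_bddAbove hC N
  have hBelow := restEigs_bddBelow hC N
  set EP := sSup (restEigs V N) with hEP
  set EM := sInf (restEigs V N) with hEM
  have hup_a : ∀ a : ℤ, (∑ i ∈ range N, V (a + i) * (x (a + i) * x (a + i)))
      + 2 * ∑ i ∈ range (N - 1), x (a + i) * x ((a + i) + 1)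
      ≤ EP * ∑ i ∈ range N, x (a + i) * x (a + i) := by
    intro a
    rw [← hQa a, ← hvv a]
    exact herm_dot_le _ (jacobi_isHermitian V a N)
      (fun i => le_csSup hAbove (eigen_mem V a N i)) _
  have hdown_a : ∀ a : ℤ, EM * ∑ i ∈ range N, x (a + i) * x (a + i)
      ≤ (∑ i ∈ range N, V (a + i) * (x (a + i) * x (a + i)))
      + 2 * ∑ i ∈ range (N - 1), x (a + i) * x ((a + i) + 1) := by
    intro a
    rw [← hQa a, ← hvv a]
    exact herm_dot_ge _ (jacobi_isHermitian V a N)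
      (fun i => csInf_le hBelow (eigen_mem V a N i)) _
  have key_up : (N : ℝ) * D + 2 * (((N - 1 : ℕ) : ℝ) * P) ≤ EP * ((N : ℝ) * S) := by
    have h := Summable.tsum_le_tsum hup_a hLsum (hWrsum.mul_left EP)
    rw [hLtsum, tsum_mul_left, hWr] at h
    exact h
  have key_down : EM * ((N : ℝ) * S) ≤ (N : ℝ) * D + 2 * (((N - 1 : ℕ) : ℝ) * P) := by
    have h := Summable.tsum_le_tsum hdown_a (hWrsum.mul_left EM) hLsum
    rw [hLtsum, tsum_mul_left, hWr] at h
    exact h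
  have hhalf : Summable fun n : ℤ => (1 / 2 : ℝ) * (x n * x n + x (n + 1) * x (n + 1)) :=
    (hsq.add hsq1).mul_left _
  have hhalf_sum : (∑' n : ℤ, (1 / 2 : ℝ) * (x n * x n + x (n + 1) * x (n + 1))) = S := by
    rw [tsum_mul_left, Summable.tsum_add hsq hsq1]
    have h1 : (∑' n : ℤ, x (n + 1) * x (n + 1)) = S :=
      (Equiv.addRight (1 : ℤ)).tsum_eq (fun m => x m * x m)
    rw [h1, ← hSdef]
    ring
  have hPle : P ≤ S := by
    have h := Summable.tsum_le_tsum (fun n : ℤ => by nlinarith [sq_nonneg (x n - x (n + 1))] :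
      ∀ n : ℤ, x n * x (n + 1) ≤ (1 / 2 : ℝ) * (x n * x n + x (n + 1) * x (n + 1))) hP hhalf
    rw [hhalf_sum] at h
    exact h
  have hPge : -S ≤ P := by
    have h := Summable.tsum_le_tsum (fun n : ℤ => by nlinarith [sq_nonneg (x n + x (n + 1))] :
      ∀ n : ℤ, -(x n * x (n + 1)) ≤ (1 / 2 : ℝ) * (x n * x n + x (n + 1) * x (n + 1)))
      hP.neg hhalf
    rw [tsum_neg, hhalf_sum] at h
    linarith
  have hNpos : (0 : ℝ) < (N : ℝ) := by
    have : 0 < N := by omega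
    exact_mod_cast this
  have hSnn : 0 ≤ S := by rw [hS]; positivity
  have hcast : ((N - 1 : ℕ) : ℝ) = (N : ℝ) - 1 := by
    have h1 : 1 ≤ N := by omega
    rw [Nat.cast_sub h1]
    norm_num
  clear_value D P S EP EM
  rw [hcast] at key_up key_down
  constructor
  · rw [hQ, ← hS]
    have expand : (N : ℝ) * ((EM - 2 / (N : ℝ)) * S) = EM * ((N : ℝ) * S) - 2 * S := by
      field_simp
    have hineq : (N : ℝ) * ((EM - 2 / (N : ℝ)) * S) ≤ (N : ℝ) * (D + (P + P)) := by
      rw [expand]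
      have iden : (N : ℝ) * (D + (P + P)) = ((N : ℝ) * D + 2 * (((N : ℝ) - 1) * P)) + 2 * P := by
        ring
      linarith [key_down, hPge, iden]
    exact le_of_mul_le_mul_left hineq hNpos
  · rw [hQ, ← hS]
    have expand : (N : ℝ) * ((EP + 2 / (N : ℝ)) * S) = EP * ((N : ℝ) * S) + 2 * S := by
      field_simp
    have hineq : (N : ℝ) * (D + (P + P)) ≤ (N : ℝ) * ((EP + 2 / (N : ℝ)) * S) := by
      rw [expand]
      have iden : (N : ℝ) * (D + (P + P)) = ((N : ℝ) * D + 2 * (((N : ℝ) - 1) * P)) + 2 * P := by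
        ring
      linarith [key_up, hPle, iden]
    exact le_of_mul_le_mul_left hineq hNpos

set_option maxHeartbeats 1000000 in
lemma spectrum_nonempty_of_symmetric (T : l2Z →L[ℝ] l2Z)
    (hsym : ∀ u v : l2Z, ⟪T u, v⟫_ℝ = ⟪u, T v⟫_ℝ) : (spectrum ℝ T).Nonempty := by
  have hx0 : (lp.single 2 (0 : ℤ) (1 : ℝ) : l2Z) ≠ 0 := by
    intro h
    have h0 : (lp.single 2 (0 : ℤ) (1 : ℝ) : l2Z) (0 : ℤ) = (1 : ℝ) :=
      lp.single_apply_self 2 0 1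
    rw [h] at h0
    simpa using h0.symm
  obtain ⟨e, he⟩ : ∃ e : l2Z, ‖e‖ = 1 := by
    refine ⟨(‖(lp.single 2 (0 : ℤ) (1 : ℝ) : l2Z)‖)⁻¹ • lp.single 2 (0 : ℤ) (1 : ℝ), ?_⟩
    rw [norm_smul, Real.norm_eq_abs, abs_inv, abs_norm]
    exact inv_mul_cancel₀ (norm_ne_zero_iff.mpr hx0)
  set qS : Set ℝ := (fun v : l2Z => ⟪T v, v⟫_ℝ) '' {v | ‖v‖ = 1} with hqS
  have hne : qS.Nonempty := ⟨⟪T e, e⟫_ℝ, e, he, rfl⟩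
  have hbdd : BddAbove qS := by
    refine ⟨‖T‖, ?_⟩
    rintro q ⟨v, hv, rfl⟩
    calc ⟪T v, v⟫_ℝ ≤ ‖T v‖ * ‖v‖ := real_inner_le_norm _ _
      _ ≤ (‖T‖ * ‖v‖) * ‖v‖ := mul_le_mul_of_nonneg_right (T.le_opNorm v) (norm_nonneg v)
      _ = ‖T‖ := by rw [Set.mem_setOf_eq.mp hv]; ring
  set M₀ := sSup qS with hM0
  have hub : ∀ v : l2Z, ⟪T v, v⟫_ℝ ≤ M₀ * ‖v‖ ^ 2 := by
    intro v
    rcases eq_or_ne v 0 with rfl | hv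
    · simp
    · have hnv : ‖v‖ ≠ 0 := norm_ne_zero_iff.mpr hv
      have h1 : ‖(‖v‖⁻¹ • v)‖ = 1 := by
        rw [norm_smul, Real.norm_eq_abs, abs_inv, abs_norm]
        exact inv_mul_cancel₀ hnv
      have h2 : ⟪T (‖v‖⁻¹ • v), ‖v‖⁻¹ • v⟫_ℝ ≤ M₀ := le_csSup hbdd ⟨_, h1, rfl⟩
      rw [_root_.map_smul, real_inner_smul_left, real_inner_smul_right] at h2
      have h3 : ⟪T v, v⟫_ℝ = ‖v‖ ^ 2 * (‖v‖⁻¹ * (‖v‖⁻¹ * ⟪T v, v⟫_ℝ)) := by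
        field_simp
      calc ⟪T v, v⟫_ℝ = ‖v‖ ^ 2 * (‖v‖⁻¹ * (‖v‖⁻¹ * ⟪T v, v⟫_ℝ)) := h3
        _ ≤ ‖v‖ ^ 2 * M₀ := mul_le_mul_of_nonneg_left h2 (by positivity)
        _ = M₀ * ‖v‖ ^ 2 := mul_comm _ _
  refine ⟨M₀, ?_⟩
  rw [spectrum.mem_iff]
  intro hunit
  set T' := algebraMap ℝ (l2Z →L[ℝ] l2Z) M₀ - T with hT'
  have hT'app : ∀ v : l2Z, T' v = M₀ • v - T v := by
    intro v
    rw [hT']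
    simp [Algebra.algebraMap_eq_smul_one]
  have hinnerT' : ∀ v : l2Z, ⟪T' v, v⟫_ℝ = M₀ * ‖v‖ ^ 2 - ⟪T v, v⟫_ℝ := by
    intro v
    rw [hT'app, inner_sub_left, real_inner_smul_left, real_inner_self_eq_norm_sq]
  have hpos : ∀ v, 0 ≤ ⟪T' v, v⟫_ℝ := fun v => by
    rw [hinnerT']; linarith [hub v]
  have hsym' : ∀ u v : l2Z, ⟪T' u, v⟫_ℝ = ⟪u, T' v⟫_ℝ := by
    intro u v
    rw [hT'app u, hT'app v, inner_sub_left, inner_sub_right, real_inner_smul_left,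
      real_inner_smul_right, hsym]
  have hCS : ∀ u v : l2Z, ⟪T' u, v⟫_ℝ * ⟪T' u, v⟫_ℝ ≤ ⟪T' u, u⟫_ℝ * ⟪T' v, v⟫_ℝ := by
    intro u v
    have hq : ∀ t : ℝ, 0 ≤ ⟪T' v, v⟫_ℝ * (t * t) + (2 * ⟪T' u, v⟫_ℝ) * t + ⟪T' u, u⟫_ℝ := by
      intro t
      have h := hpos (u + t • v)
      have hc : ⟪T' v, u⟫_ℝ = ⟪T' u, v⟫_ℝ := by
        rw [hsym' v u, real_inner_comm]
      have hexp : ⟪T' (u + t • v), u + t • v⟫_ℝ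
          = ⟪T' v, v⟫_ℝ * (t * t) + (2 * ⟪T' u, v⟫_ℝ) * t + ⟪T' u, u⟫_ℝ := by
        rw [map_add, _root_.map_smul, inner_add_left, inner_add_right, inner_add_right,
          real_inner_smul_left, real_inner_smul_left, real_inner_smul_right,
          real_inner_smul_right, hc]
        ring
      rw [hexp] at h
      exact h
    have hd := discrim_le_zero hq
    simp only [discrim] at hd
    nlinarith [hd]
  obtain ⟨Sinv, -, hinvmul⟩ := isUnit_iff_exists.mp hunit
  have happly : ∀ v : l2Z, Sinv (T' v) = v := by
    intro v
    have h := congrArg (fun f : l2Z →L[ℝ] l2Z => f v) hinvmul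
    simpa [ContinuousLinearMap.mul_apply] using h
  have hlow : ∀ v : l2Z, ‖v‖ ≤ ‖Sinv‖ * ‖T' v‖ := by
    intro v
    calc ‖v‖ = ‖Sinv (T' v)‖ := by rw [happly]
      _ ≤ ‖Sinv‖ * ‖T' v‖ := Sinv.le_opNorm _
  have hSnorm : 0 < ‖Sinv‖ := by
    by_contra hcon
    push_neg at hcon
    have h0 : ‖Sinv‖ = 0 := le_antisymm hcon (norm_nonneg _)
    have h1 := hlow e
    rw [h0, zero_mul, he] at h1
    linarith
  have hT'norm : 0 < ‖T'‖ := by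
    by_contra hcon
    push_neg at hcon
    have h0 : ‖T'‖ = 0 := le_antisymm hcon (norm_nonneg _)
    have hT0 : T' = 0 := (ContinuousLinearMap.opNorm_zero_iff T').mp h0
    have h1 := hlow e
    rw [hT0] at h1
    simp only [ContinuousLinearMap.zero_apply, norm_zero, mul_zero] at h1
    rw [he] at h1
    linarith
  have hcoer : ∀ v : l2Z, (1 / (‖Sinv‖ ^ 2 * ‖T'‖)) * ‖v‖ ^ 2 ≤ ⟪T' v, v⟫_ℝ := by
    intro v
    rcases eq_or_ne (T' v) 0 with h0 | h0
    · have hv0 : v = 0 := by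
        have h1 := hlow v
        rw [h0, norm_zero, mul_zero] at h1
        exact norm_le_zero_iff.mp h1
      rw [hv0, norm_zero, map_zero, inner_zero_left]
      have hz : (1 / (‖Sinv‖ ^ 2 * ‖T'‖)) * (0 : ℝ) ^ 2 = 0 := by ring
      rw [hz]
    · have hn : 0 < ‖T' v‖ := norm_pos_iff.mpr h0
      have h5 := hCS v (T' v)
      have h6 : ⟪T' v, T' v⟫_ℝ = ‖T' v‖ ^ 2 := real_inner_self_eq_norm_sq _
      have h7 : ⟪T' (T' v), T' v⟫_ℝ ≤ ‖T'‖ * ‖T' v‖ ^ 2 := by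
        calc ⟪T' (T' v), T' v⟫_ℝ ≤ ‖T' (T' v)‖ * ‖T' v‖ := real_inner_le_norm _ _
          _ ≤ (‖T'‖ * ‖T' v‖) * ‖T' v‖ :=
              mul_le_mul_of_nonneg_right (T'.le_opNorm _) (norm_nonneg _)
          _ = ‖T'‖ * ‖T' v‖ ^ 2 := by ring
      have h4 : ‖T' v‖ ^ 2 * ‖T' v‖ ^ 2 ≤ ⟪T' v, v⟫_ℝ * (‖T'‖ * ‖T' v‖ ^ 2) := by
        nlinarith [hpos v, h5, h6, h7]
      have h8 : ‖T' v‖ ^ 2 ≤ ⟪T' v, v⟫_ℝ * ‖T'‖ := by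
        have hpos2 : 0 < ‖T' v‖ ^ 2 := by positivity
        nlinarith [h4]
      have h9 : ‖v‖ ^ 2 ≤ ‖Sinv‖ ^ 2 * ‖T' v‖ ^ 2 := by
        nlinarith [hlow v, norm_nonneg v, norm_nonneg (T' v), hSnorm]
      have h10 : ‖v‖ ^ 2 ≤ ⟪T' v, v⟫_ℝ * (‖Sinv‖ ^ 2 * ‖T'‖) := by
        nlinarith [h8, h9, sq_nonneg ‖Sinv‖]
      rw [div_mul_eq_mul_div, one_mul, div_le_iff₀ (by positivity : (0:ℝ) < ‖Sinv‖ ^ 2 * ‖T'‖)]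
      exact h10
  set ε := 1 / (‖Sinv‖ ^ 2 * ‖T'‖) with hε
  have hεpos : 0 < ε := by
    rw [hε]
    exact div_pos one_pos (mul_pos (pow_pos hSnorm 2) hT'norm)
  obtain ⟨q, hqmem, hq⟩ := exists_lt_of_lt_csSup hne (show M₀ - ε < M₀ by linarith)
  obtain ⟨v, hv1, rfl⟩ := hqmem
  have h11 := hcoer v
  rw [hinnerT' v, Set.mem_setOf_eq.mp hv1] at h11
  simp only [one_pow, mul_one] at h11
  linarith

lemma H_symmetric (V : ℤ → ℝ) {C : ℝ} (hC : ∀ n, |V n| ≤ C) (H : l2Z →L[ℝ] l2Z)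
    (hH : ∀ u : l2Z, ∀ n : ℤ, H u n = V n * u n + u (n + 1) + u (n - 1)) :
    ∀ u v : l2Z, ⟪H u, v⟫_ℝ = ⟪u, H v⟫_ℝ := by
  intro u v
  set x : ℤ → ℝ := fun n => u n with hx
  set y : ℤ → ℝ := fun n => v n with hy
  have hxx : Summable fun n => x n * x n := l2_summable_mul u u
  have hyy : Summable fun n => y n * y n := l2_summable_mul v v
  have hxx1 : Summable fun n => x (n + 1) * x (n + 1) := by
    have h := ((Equiv.addRight (1 : ℤ)).summable_iff (f := fun n : ℤ => x n * x n)).mpr hxx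
    exact h
  have hxxm1 : Summable fun n => x (n - 1) * x (n - 1) := by
    have h := ((Equiv.subRight (1 : ℤ)).summable_iff (f := fun n : ℤ => x n * x n)).mpr hxx
    exact h
  have hyy1 : Summable fun n => y (n + 1) * y (n + 1) := by
    have h := ((Equiv.addRight (1 : ℤ)).summable_iff (f := fun n : ℤ => y n * y n)).mpr hyy
    exact h
  have hyym1 : Summable fun n => y (n - 1) * y (n - 1) := by
    have h := ((Equiv.subRight (1 : ℤ)).summable_iff (f := fun n : ℤ => y n * y n)).mpr hyy
    exact h
  have hxy : Summable fun n => x n * y n := summable_mul_of_sq hxx hyy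
  have s1 : Summable fun n => V n * (x n * y n) := by
    apply Summable.of_abs
    refine Summable.of_nonneg_of_le (fun n => abs_nonneg _) (fun n => ?_) (hxy.abs.mul_left C)
    rw [abs_mul]
    exact mul_le_mul_of_nonneg_right (hC n) (abs_nonneg _)
  have s2 : Summable fun n => x (n + 1) * y n := summable_mul_of_sq hxx1 hyy
  have s3 : Summable fun n => x (n - 1) * y n := summable_mul_of_sq hxxm1 hyy
  have t2 : Summable fun n => x n * y (n + 1) := summable_mul_of_sq hxx hyy1
  have t3 : Summable fun n => x n * y (n - 1) := summable_mul_of_sq hxx hyym1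
  have hLHS : ⟪H u, v⟫_ℝ = (∑' n, V n * (x n * y n))
      + ((∑' n, x (n + 1) * y n) + ∑' n, x (n - 1) * y n) := by
    rw [l2_inner_tsum]
    have h1 : ∀ n : ℤ, (H u) n * v n
        = V n * (x n * y n) + (x (n + 1) * y n + x (n - 1) * y n) := fun n => by
      rw [hH u n]; ring
    rw [tsum_congr h1, Summable.tsum_add s1 (s2.add s3), Summable.tsum_add s2 s3]
  have hRHS : ⟪u, H v⟫_ℝ = (∑' n, V n * (x n * y n))
      + ((∑' n, x n * y (n - 1)) + ∑' n, x n * y (n + 1)) := by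
    rw [l2_inner_tsum]
    have h1 : ∀ n : ℤ, u n * (H v) n
        = V n * (x n * y n) + (x n * y (n - 1) + x n * y (n + 1)) := fun n => by
      rw [hH v n]; ring
    rw [tsum_congr h1, Summable.tsum_add s1 (t3.add t2), Summable.tsum_add t3 t2]
  rw [hLHS, hRHS]
  congr 1
  congr 1
  · have h1 : ∀ n : ℤ, x (n + 1) * y n = (fun m => x m * y (m - 1)) (n + 1) := fun n => by
      simp only [add_sub_cancel_right]
    rw [tsum_congr h1]
    exact (Equiv.addRight (1 : ℤ)).tsum_eq fun m => x m * y (m - 1)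
  · have h1 : ∀ n : ℤ, x (n - 1) * y n = (fun m => x m * y (m + 1)) (n - 1) := fun n => by
      simp only [sub_add_cancel]
    rw [tsum_congr h1]
    exact (Equiv.subRight (1 : ℤ)).tsum_eq fun m => x m * y (m + 1)

set_option maxHeartbeats 1000000 in
theorem stmt4 (V : ℤ → ℝ) (hV : ∃ C, ∀ n, |V n| ≤ C)
    (H : l2Z →L[ℝ] l2Z)
    (hH : ∀ u : l2Z, ∀ n : ℤ, H u n = V n * u n + u (n + 1) + u (n - 1))
    (N : ℕ) (hN : 2 ≤ N) :
    sSup (spectrum ℝ H) ≤ sSup (restEigs V N) + 2 / N ∧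
    sInf (spectrum ℝ H) ≥ sInf (restEigs V N) - 2 / N := by
  obtain ⟨C, hC⟩ := hV
  have hsym := H_symmetric V hC H hH
  have hne := spectrum_nonempty_of_symmetric H hsym
  have hbound : ∀ lam ∈ spectrum ℝ H,
      sInf (restEigs V N) - 2 / N ≤ lam ∧ lam ≤ sSup (restEigs V N) + 2 / N := by
    intro lam hlam
    have happ : ∀ w : l2Z, (algebraMap ℝ (l2Z →L[ℝ] l2Z) lam - H) w = lam • w - H w := by
      intro w
      simp [Algebra.algebraMap_eq_smul_one]
    have hinner : ∀ w : l2Z, ⟪(algebraMap ℝ (l2Z →L[ℝ] l2Z) lam - H) w, w⟫_ℝ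
        = lam * ‖w‖ ^ 2 - ⟪H w, w⟫_ℝ := by
      intro w
      rw [happ, inner_sub_left, real_inner_smul_left, real_inner_self_eq_norm_sq]
    constructor
    · by_contra hcon
      push_neg at hcon
      refine (spectrum.mem_iff.mp hlam) ?_
      refine ContinuousLinearMap.isUnit_of_forall_le_norm_inner_map _
        (c := Real.toNNReal ((sInf (restEigs V N) - 2 / N) - lam))
        (Real.toNNReal_pos.mpr (by linarith)) ?_
      intro w
      have hq := (quad_bound V hC H hH hN w).1
      rw [hinner, Real.norm_eq_abs,
        Real.coe_toNNReal _ (by linarith : (0:ℝ) ≤ (sInf (restEigs V N) - 2 / N) - lam)]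
      have h2 : ‖w‖ ^ 2 * ((sInf (restEigs V N) - 2 / N) - lam)
          ≤ ⟪H w, w⟫_ℝ - lam * ‖w‖ ^ 2 := by nlinarith [hq]
      have h3 : ⟪H w, w⟫_ℝ - lam * ‖w‖ ^ 2 ≤ |lam * ‖w‖ ^ 2 - ⟪H w, w⟫_ℝ| := by
        rw [abs_sub_comm]
        exact le_abs_self _
      linarith
    · by_contra hcon
      push_neg at hcon
      refine (spectrum.mem_iff.mp hlam) ?_
      refine ContinuousLinearMap.isUnit_of_forall_le_norm_inner_map _
        (c := Real.toNNReal (lam - (sSup (restEigs V N) + 2 / N)))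
        (Real.toNNReal_pos.mpr (by linarith)) ?_
      intro w
      have hq := (quad_bound V hC H hH hN w).2
      rw [hinner, Real.norm_eq_abs,
        Real.coe_toNNReal _ (by linarith : (0:ℝ) ≤ lam - (sSup (restEigs V N) + 2 / N))]
      have h2 : ‖w‖ ^ 2 * (lam - (sSup (restEigs V N) + 2 / N))
          ≤ lam * ‖w‖ ^ 2 - ⟪H w, w⟫_ℝ := by nlinarith [hq]
      have h3 : lam * ‖w‖ ^ 2 - ⟪H w, w⟫_ℝ ≤ |lam * ‖w‖ ^ 2 - ⟪H w, w⟫_ℝ| := le_abs_self _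
      linarith
  constructor
  · exact csSup_le hne fun lam hlam => (hbound lam hlam).2
  · exact le_csInf hne fun lam hlam => (hbound lam hlam).1
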